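/- For any (α₁, ..., αₙ) ∈ ℂⁿ there exists a monic-up-to-scalar polynomial of degree at most n with P(0)=1, namely the degree-n truncation of exp(-∑_{k≥1} (α_k/k) x^k), whose multiset of roots ρ₁,...,ρ_m (m = deg Pₙ ≤ n, all nonzero) satisfies ∑_i ρᵢ^{-k} = α_k for k = 1, ..., m. In particular every finite complex sequence is realizable as the initial negative power sums of the roots of some polynomial. -/

import Mathlib

noncomputable def expPS (f : PowerSeries ℂ) : PowerSeries ℂ :=
  PowerSeries.mk fun n =>
    ∑ m ∈ Finset.range (n + 1), ((m.factorial : ℂ))⁻¹ * PowerSeries.coeff n (f ^ m)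

noncomputable def logPS (f : PowerSeries ℂ) : PowerSeries ℂ :=
  PowerSeries.mk fun n =>
    ∑ m ∈ Finset.range (n + 1), (-1 : ℂ) ^ (m + 1) * (m : ℂ)⁻¹ * PowerSeries.coeff n ((f - 1) ^ m)

/-! With `f = -∑ αₖ Xᵏ / k`, the series `E = expPS f` solves `E' = f' E`. Since `P` agrees with `E`
up to order `n + 1`, it solves the same equation modulo `Xⁿ`, i.e. `P' / P ≡ f' mod Xⁿ`. As
`P(0) = 1`, `P = ∏ (1 - X / ρ)` over its roots, so `P' / P = -∑ⱼ (∑ ρ^{-(j+1)}) Xʲ`; comparing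
coefficients gives `∑ ρ^{-k} = αₖ` for `k ≤ n`. -/

open PowerSeries

theorem expPS_eq_subst_exp {f : ℂ⟦X⟧} (hf : constantCoeff f = 0) :
    expPS f = (exp ℂ).subst f := by
  have hsubst := HasSubst.of_constantCoeff_zero' hf
  ext n
  rw [coeff_subst' hsubst, finsum_eq_sum_of_support_subset (s := Finset.range (n + 1))]
  · simp [expPS, coeff_exp]
  · intro d hd
    rw [Function.mem_support] at hd
    simp only [Finset.coe_range, Set.mem_Iio]
    by_contra! hnd
    have hvanish := X_pow_dvd_iff.mp (pow_dvd_pow_of_dvd (X_dvd_iff.mpr hf) d) n (by omega)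
    exact hd (by rw [hvanish, smul_zero])

theorem derivative_expPS {f : ℂ⟦X⟧} (hf : constantCoeff f = 0) :
    d⁄dX ℂ (expPS f) = d⁄dX ℂ f * expPS f := by
  rw [expPS_eq_subst_exp hf, derivative_subst (HasSubst.of_constantCoeff_zero' hf),
    derivative_exp, mul_comm]

theorem coeff_zero_expPS (f : ℂ⟦X⟧) : coeff 0 (expPS f) = 1 := by
  simp [expPS]

namespace PowerSeries

variable {R : Type*} [CommRing R]

theorem X_pow_dvd_derivative {n : ℕ} {g : R⟦X⟧} (h : X ^ (n + 1) ∣ g) : X ^ n ∣ d⁄dX R g := by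
  rw [X_pow_dvd_iff] at h ⊢
  intro m hm
  rw [coeff_derivative, h (m + 1) (by omega), zero_mul]

theorem X_pow_dvd_sub_trunc (n : ℕ) (g : R⟦X⟧) : X ^ n ∣ g - (trunc n g : R⟦X⟧) :=
  ⟨_, sub_eq_of_eq_add (eq_X_pow_mul_shift_add_trunc n g)⟩

theorem X_pow_dvd_derivative_sub_mul {n : ℕ} {E P g : R⟦X⟧} (hE : d⁄dX R E = g * E)
    (h : X ^ (n + 1) ∣ E - P) : X ^ n ∣ d⁄dX R P - g * P := by
  have hsplit : d⁄dX R P - g * P = g * (E - P) - d⁄dX R (E - P) := by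
    rw [map_sub, hE]; ring
  rw [hsplit]
  exact dvd_sub (((pow_dvd_pow X n.le_succ).trans h).mul_left g) (X_pow_dvd_derivative h)

theorem mk_pow_mul_one_sub_C_mul_X (c : R) : (mk fun j => c ^ j) * (1 - C c * X) = 1 := by
  simpa [rescale_mk, rescale_X] using congrArg (rescale c) (mk_one_mul_one_sub_eq_one (S := R))

theorem derivative_multiset_prod_one_sub_C_mul_X (s : Multiset R) :
    d⁄dX R (s.map fun c => 1 - C c * X).prod =
      -((s.map fun c => 1 - C c * X).prod * mk fun j => (s.map (· ^ (j + 1))).sum) := by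
  induction s using Multiset.induction with
  | empty => ext; simp
  | cons c s ih =>
    have hsum : (mk fun j => ((c ::ₘ s).map (· ^ (j + 1))).sum) =
        C c * (mk fun j => c ^ j) + mk fun j => (s.map (· ^ (j + 1))).sum := by
      ext j; simp [pow_succ, mul_comm]
    rw [hsum]
    simp only [Multiset.map_cons, Multiset.prod_cons, Derivation.leibniz, ih, smul_eq_mul,
      map_sub, derivative_one, derivative_C, derivative_X]
    linear_combination (s.map fun c => 1 - C c * X).prod * C c * mk_pow_mul_one_sub_C_mul_X c

end PowerSeries

namespace Polynomial

variable {K : Type*} [Field K] {P : K[X]}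

theorem Splits.eq_C_eval_zero_mul_prod_one_sub_C_inv_mul_X (hP : P.Splits) (h0 : P.eval 0 ≠ 0) :
    P = C (P.eval 0) * (P.roots.map fun ρ => 1 - C ρ⁻¹ * X).prod := by
  have hfactor : ∀ ρ ∈ P.roots, X - C ρ = C (-ρ) * (1 - C ρ⁻¹ * X) := by
    intro ρ hρ
    have hρ0 : ρ ≠ 0 := by rintro rfl; exact h0 (isRoot_of_mem_roots hρ)
    rw [mul_sub, mul_one, ← mul_assoc, ← C_mul, neg_mul, mul_inv_cancel₀ hρ0]
    simp only [map_neg, map_one]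
    ring
  conv_lhs => rw [hP.eq_prod_roots, Multiset.map_congr rfl hfactor, Multiset.prod_map_mul,
    ← mul_assoc]
  rw [hP.eval_eq_prod_roots 0, C_mul, map_multiset_prod, Multiset.map_map]
  simp

theorem Splits.derivative_coe_eq_neg_mul_sum_inv_roots_pow (hP : P.Splits) (h0 : P.eval 0 ≠ 0) :
    d⁄dX K (P : K⟦X⟧) =
      -(P * PowerSeries.mk fun j => (P.roots.map fun ρ => ρ⁻¹ ^ (j + 1)).sum) := by
  have hcoe : (P : K⟦X⟧) = PowerSeries.C (P.eval 0) *
      ((P.roots.map (·⁻¹)).map fun c => 1 - PowerSeries.C c * PowerSeries.X).prod := by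
    conv_lhs => rw [hP.eq_C_eval_zero_mul_prod_one_sub_C_inv_mul_X h0]
    rw [← coeToPowerSeries.ringHom_apply, map_mul, map_multiset_prod, Multiset.map_map,
      Multiset.map_map]
    simp [Function.comp_def]
  rw [hcoe, Derivation.leibniz, derivative_multiset_prod_one_sub_C_mul_X, PowerSeries.derivative_C]
  simp only [Multiset.map_map, Function.comp_def, smul_eq_mul, mul_zero, add_zero]
  ring

end Polynomial

theorem stmt4 (n : ℕ) (α : ℕ → ℂ) :
    ∃ P : Polynomial ℂ,
      P = PowerSeries.trunc (n + 1)
          (expPS (PowerSeries.mk fun k => if k = 0 then 0 else -(α k) / (k : ℂ))) ∧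
      P.eval 0 = 1 ∧ P.natDegree ≤ n ∧ (∀ ρ ∈ P.roots, ρ ≠ 0) ∧
      ∀ k, 1 ≤ k → k ≤ P.natDegree → (P.roots.map fun ρ => ρ⁻¹ ^ k).sum = α k := by
  set f : ℂ⟦X⟧ := mk fun k => if k = 0 then 0 else -(α k) / (k : ℂ) with hf
  have hf0 : constantCoeff f = 0 := by simp [hf]
  set P := trunc (n + 1) (expPS f) with hP
  have hP0 : P.eval 0 = 1 := by
    rw [← Polynomial.coeff_zero_eq_eval_zero, hP, coeff_trunc, if_pos n.succ_pos, coeff_zero_expPS]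
  have hPdeg : P.natDegree ≤ n := Nat.lt_succ_iff.mp (natDegree_trunc_lt _ n)
  refine ⟨P, rfl, hP0, hPdeg, ?_, ?_⟩
  · rintro ρ hρ rfl
    exact one_ne_zero (hP0.symm.trans (Polynomial.isRoot_of_mem_roots hρ))
  intro k hk1 hkP
  obtain ⟨j, rfl⟩ : ∃ j, k = j + 1 := ⟨k - 1, by omega⟩
  have hode : X ^ n ∣ d⁄dX ℂ (P : ℂ⟦X⟧) - d⁄dX ℂ f * (P : ℂ⟦X⟧) :=
    X_pow_dvd_derivative_sub_mul (derivative_expPS hf0) (X_pow_dvd_sub_trunc _ _)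
  have hunit : IsUnit (P : ℂ⟦X⟧) := isUnit_iff_constantCoeff.mpr <| by
    simp [Polynomial.constantCoeff_coe, Polynomial.coeff_zero_eq_eval_zero, hP0]
  rw [(IsAlgClosed.splits P).derivative_coe_eq_neg_mul_sum_inv_roots_pow (by simp [hP0]),
    ← neg_add', dvd_neg, mul_comm (d⁄dX ℂ f), ← mul_add, hunit.dvd_mul_left] at hode
  have hcoeff := X_pow_dvd_iff.mp hode j (by omega)
  rw [map_add, coeff_mk, coeff_derivative, hf, coeff_mk, if_neg j.succ_ne_zero, Nat.cast_succ,
    div_mul_cancel₀ _ (Nat.cast_add_one_ne_zero j)] at hcoeff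
  linear_combination hcoeff
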